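/- Let R be a commutative ring, J an ideal, and K^i = {A ∈ GL_n(R) : A ≡ I_n mod J^i}. Then the i-th term Γ^iK^1 of the lower central series of K^1 is contained in K^i. -/

import Mathlib

/- In `GL_n(R)` the commutator `ABA⁻¹B⁻¹` is congruent to `1` modulo the product of the levels of `A`
and `B`, because `ABA⁻¹B⁻¹ - 1 = ((A - 1)(B - 1) - (B - 1)(A - 1))A⁻¹B⁻¹`. Inducting along the lower
central series of `K¹` then gives `Γ^{m+1} K¹ ⊆ K^{m+1}`. -/

open Matrix

/-- The congruence subgroup of `GL n R` of level `I`: invertible matrices congruent to the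
identity modulo the ideal `I` (every entry of `A - 1` lies in `I`). -/
def congruenceSubgroup (R : Type) [CommRing R] (n : ℕ) (I : Ideal R) :
    Subgroup (GL (Fin n) R) :=
  Subgroup.copy
    (MonoidHom.ker (Units.map ((Ideal.Quotient.mk I).mapMatrix.toMonoidHom)))
    {A | ∀ k l, (A : Matrix (Fin n) (Fin n) R) k l - (1 : Matrix (Fin n) (Fin n) R) k l ∈ I}
    (by
      ext A
      simp only [Set.mem_setOf_eq, SetLike.mem_coe, MonoidHom.mem_ker, Units.ext_iff,
        Units.coe_map, RingHom.toMonoidHom_eq_coe, MonoidHom.coe_coe, Units.val_one]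
      rw [← Matrix.ext_iff]
      refine forall₂_congr fun k l => ?_
      rw [RingHom.mapMatrix_apply, Matrix.map_apply,
        show (1 : Matrix (Fin n) (Fin n) (R ⧸ I)) k l
            = Ideal.Quotient.mk I ((1 : Matrix (Fin n) (Fin n) R) k l) from by
          by_cases h : k = l <;> simp [Matrix.one_apply, h],
        Ideal.Quotient.mk_eq_mk_iff_sub_mem])

open scoped commutatorElement

theorem Units.val_commutatorElement_sub_one {α : Type*} [Ring α] (u v : αˣ) :
    ((⁅u, v⁆ : αˣ) : α) - 1 = ((u - 1) * (v - 1) - (v - 1) * (u - 1)) * ↑(u⁻¹ * v⁻¹) := by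
  have hvu : (v * u : α) * ↑(u⁻¹ * v⁻¹) = 1 := by
    rw [← Units.val_mul, ← _root_.mul_inv_rev, Units.mul_inv]
  calc ((⁅u, v⁆ : αˣ) : α) - 1 = u * v * ↑(u⁻¹ * v⁻¹) - v * u * ↑(u⁻¹ * v⁻¹) := by
        rw [hvu, commutatorElement_def, mul_assoc (u * v), Units.val_mul, Units.val_mul]
    _ = ((u - 1) * (v - 1) - (v - 1) * (u - 1)) * ↑(u⁻¹ * v⁻¹) := by noncomm_ring

theorem Ideal.mul_mem_matrix_mul {R ι : Type*} [CommRing R] [Fintype ι] [DecidableEq ι]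
    {I J : Ideal R} {M N : Matrix ι ι R} (hM : M ∈ I.matrix ι) (hN : N ∈ J.matrix ι) :
    M * N ∈ (I * J).matrix ι := fun k l =>
  Ideal.sum_mem _ fun j _ => Ideal.mul_mem_mul (hM k j) (hN j l)

section CongruenceSubgroup

variable {R : Type} [CommRing R] {n : ℕ}

theorem mem_congruenceSubgroup_iff {I : Ideal R} {A : GL (Fin n) R} :
    A ∈ congruenceSubgroup R n I ↔ (A : Matrix (Fin n) (Fin n) R) - 1 ∈ I.matrix (Fin n) := by
  rw [congruenceSubgroup, ← SetLike.mem_coe, Subgroup.coe_copy]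
  rfl

theorem congruenceSubgroup_mono {I J : Ideal R} (h : I ≤ J) :
    congruenceSubgroup R n I ≤ congruenceSubgroup R n J := fun _ hA => by
  rw [mem_congruenceSubgroup_iff] at hA ⊢
  exact Ideal.matrix_monotone _ h hA

theorem commutator_congruenceSubgroup_le (I J : Ideal R) :
    ⁅congruenceSubgroup R n I, congruenceSubgroup R n J⁆ ≤ congruenceSubgroup R n (I * J) := by
  rw [Subgroup.commutator_le]
  intro A hA B hB
  rw [mem_congruenceSubgroup_iff] at hA hB ⊢
  rw [Units.val_commutatorElement_sub_one, ← Ideal.mul_top (I * J)]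
  refine Ideal.mul_mem_matrix_mul (Submodule.sub_mem _ (Ideal.mul_mem_matrix_mul hA hB) ?_) ?_
  · rw [Ideal.mul_comm]
    exact Ideal.mul_mem_matrix_mul hB hA
  · exact fun _ _ => Submodule.mem_top

theorem map_subtype_lowerCentralSeries_le (J : Ideal R) (m : ℕ) :
    ((⊤ : Subgroup (congruenceSubgroup R n J)).lowerCentralSeries m).map
        (congruenceSubgroup R n J).subtype ≤ congruenceSubgroup R n (J ^ (m + 1)) := by
  induction m with
  | zero =>
    rw [zero_add, pow_one]
    exact Subgroup.map_subtype_le _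
  | succ m ih =>
    rw [Subgroup.lowerCentralSeries_succ, Subgroup.map_commutator, pow_succ]
    refine (Subgroup.commutator_mono ih ?_).trans (commutator_congruenceSubgroup_le _ _)
    exact Subgroup.map_subtype_le _

end CongruenceSubgroup

theorem lowerCentralSeries_le_congruenceSubgroup_general (R : Type) [CommRing R] (n : ℕ)
    (J : Ideal R) (i : ℕ) :
    Subgroup.map (congruenceSubgroup R n (J ^ 1)).subtype
        (Subgroup.lowerCentralSeries (⊤ : Subgroup ↥(congruenceSubgroup R n (J ^ 1))) (i - 1)) ≤
      congruenceSubgroup R n (J ^ i) := by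
  refine (map_subtype_lowerCentralSeries_le (J ^ 1) (i - 1)).trans (congruenceSubgroup_mono ?_)
  -- `i - 1` truncates: for `i = 0` the claim is `K¹ ≤ K⁰`.
  rw [pow_one]
  exact Ideal.pow_le_pow_right (by omega)

/-- For a commutative ring `R`, an ideal `J`, and the congruence subgroups
`K^i = {A ∈ GL_n(R) : A ≡ 1 mod J^i}`, the `i`-th term `Γ^i K^1` of the lower central
series of `K^1` is contained in `K^i` (here `Γ^i = lowerCentralSeries _ (i-1)`). -/
theorem lowerCentralSeries_le_congruenceSubgroup (R : Type) [CommRing R] (n : ℕ)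
    (J : Ideal R) (i : ℕ) (hi : 1 ≤ i) :
    Subgroup.map (congruenceSubgroup R n (J ^ 1)).subtype
        (Subgroup.lowerCentralSeries (⊤ : Subgroup ↥(congruenceSubgroup R n (J ^ 1))) (i - 1)) ≤
      congruenceSubgroup R n (J ^ i) :=
  lowerCentralSeries_le_congruenceSubgroup_general R n J i
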